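/- arXiv:1211.6593 — 3 statements merged into one kernel-verified Lean document; each statement's English description precedes it below -/
import Mathlib

section
/- Let S be a commutative semigroup with zero and let Γ(S) be its zero-divisor graph. If x is a vertex of Γ(S) and there exists a vertex y with d(x,y) = 3 (graph distance in Γ(S)), then x² ≠ 0 in S. -/
/-- A zero-divisor: a nonzero element annihilated by some nonzero element. -/
def IsZeroDivisorElem {S : Type*} [Mul S] [Zero S] (x : S) : Prop :=
  x ≠ 0 ∧ ∃ y : S, y ≠ 0 ∧ x * y = 0

/-- The zero-divisor graph Γ(S) of a commutative semigroup with zero: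
vertices are the nonzero zero-divisors, two distinct vertices adjacent iff their product is 0. -/
def zdGraph (S : Type*) [CommSemigroup S] [Zero S] :
    SimpleGraph {x : S // IsZeroDivisorElem x} where
  Adj a b := a ≠ b ∧ (a : S) * (b : S) = 0
  symm := ⟨by
    rintro a b ⟨h1, h2⟩
    exact ⟨h1.symm, by rwa [mul_comm] at h2⟩⟩
  loopless := ⟨by rintro a ⟨h, _⟩; exact h rfl⟩

/-- An end vertex: a vertex of degree one (exactly one neighbor). -/
def IsEndVertex {V : Type*} (G : SimpleGraph V) (v : V) : Prop :=
  ∃! u, G.Adj v u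

/-- An internal vertex: degree ≥ 2 and no neighbor of degree 1. -/
def IsInternal {V : Type*} (G : SimpleGraph V) (v : V) : Prop :=
  (∃ u, G.Adj v u) ∧ ¬ IsEndVertex G v ∧ ∀ u, G.Adj v u → ¬ IsEndVertex G u

/-- C(a,b): the elements of S that are vertices whose neighborhood is exactly {a, b}. -/
def cSet (S : Type*) [CommSemigroup S] [Zero S]
    (a b : {x : S // IsZeroDivisorElem x}) : Set S :=
  {x : S | ∃ h : IsZeroDivisorElem x, (zdGraph S).neighborSet ⟨x, h⟩ = {a, b}}

/-- T_a: the elements of S that are end vertices adjacent to the vertex a. -/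
def tSet (S : Type*) [CommSemigroup S] [Zero S]
    (a : {x : S // IsZeroDivisorElem x}) : Set S :=
  {x : S | ∃ h : IsZeroDivisorElem x,
    (zdGraph S).Adj ⟨x, h⟩ a ∧ IsEndVertex (zdGraph S) ⟨x, h⟩}

/-!
A vertex x with x² = 0 has eccentricity at most 2. Given any vertex y, pick c ≠ 0 with yc = 0.
If xc = 0, then x - c - y is a path; otherwise xc is a vertex, and it is adjacent to x
(as x·xc = x²c = 0) and to y (as xc·y = x·cy = 0), so x - xc - y is a path.
-/

section ZeroDivisorGraph

variable {S : Type*} [CommSemigroup S] [Zero S]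

theorem zdGraph_dist_le_one_of_mul_eq_zero (x y : {s : S // IsZeroDivisorElem s})
    (hxy : (x : S) * y = 0) : (zdGraph S).dist x y ≤ 1 := by
  by_cases hne : x = y
  · simp [hne]
  · exact (SimpleGraph.dist_eq_one_iff_adj.mpr (show (zdGraph S).Adj x y from ⟨hne, hxy⟩)).le

theorem zdGraph_dist_le_two_of_mul_eq_zero_of_mul_eq_zero (x y : {s : S // IsZeroDivisorElem s})
    {s : S} (hs : s ≠ 0) (hxs : (x : S) * s = 0) (hsy : s * y = 0) :
    (zdGraph S).dist x y ≤ 2 := by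
  let v : {s : S // IsZeroDivisorElem s} := ⟨s, hs, x, x.2.1, by rwa [mul_comm]⟩
  by_cases hxv : x = v
  · have hxy : (x : S) * y = 0 := by rw [hxv]; exact hsy
    exact (zdGraph_dist_le_one_of_mul_eq_zero x y hxy).trans (by norm_num)
  by_cases hvy : v = y
  · have hxy : (x : S) * y = 0 := by rw [← hvy]; exact hxs
    exact (zdGraph_dist_le_one_of_mul_eq_zero x y hxy).trans (by norm_num)
  exact SimpleGraph.dist_le
    (SimpleGraph.Walk.cons (show (zdGraph S).Adj x v from ⟨hxv, hxs⟩)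
      (show (zdGraph S).Adj v y from ⟨hvy, hsy⟩).toWalk)

theorem zdGraph_dist_le_two_of_mul_self_eq_zero (hz : ∀ x : S, 0 * x = 0)
    (x y : {s : S // IsZeroDivisorElem s}) (hx : (x : S) * x = 0) :
    (zdGraph S).dist x y ≤ 2 := by
  obtain ⟨c, hc, hyc⟩ := y.2.2
  have hcy : c * y = 0 := by rw [mul_comm]; exact hyc
  by_cases hxc : (x : S) * c = 0
  · exact zdGraph_dist_le_two_of_mul_eq_zero_of_mul_eq_zero x y hc hxc hcy
  · refine zdGraph_dist_le_two_of_mul_eq_zero_of_mul_eq_zero x y hxc ?_ ?_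
    · rw [← mul_assoc, hx, hz]
    · rw [mul_assoc, hcy, mul_comm, hz]

end ZeroDivisorGraph

/-- If x is a vertex of Γ(S) and some vertex y is at distance 3 from x, then x² ≠ 0. -/
theorem stmt2 {S : Type*} [CommSemigroup S] [Zero S] (hz : ∀ x : S, 0 * x = 0)
    (x y : {s : S // IsZeroDivisorElem s})
    (h : (zdGraph S).dist x y = 3) :
    (x : S) * (x : S) ≠ 0 := fun hx => by
  have := zdGraph_dist_le_two_of_mul_self_eq_zero hz x y hx
  omega
end

section
/- Let S be a commutative semigroup with zero and G = Γ(S). Suppose there exist adjacent vertices a, b, a vertex s with N(s) = {a,b}, and a vertex z with d(s,z) = 3. Then every element c with N(c) = {a,b} satisfies c² ≠ 0, and consequently the annihilator of c equals {0, a, b}. -/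
/-! If `c² = 0`, then for every edge `y — z` of `Γ(S)` the vertex `z` annihilates the nonzero
element `y` or `c * y` of `Ann(c)`; with `N(c) = {a, b}` this nonzero part is `{a, b, c}`. But a
vertex `z` at distance `3` from `s` annihilates none of `a, b, c`: `a, b` are neighbours of `s`,
and `c` has all its neighbours among those of `s`, so `z` would be within distance `2` of `s`. -/

namespace SimpleGraph

variable {V : Type*} {G : SimpleGraph V} {s v w : V}

lemma dist_le_two_of_adj_of_eq_or_adj (hsv : G.Adj s v) (hvw : v = w ∨ G.Adj v w) :
    G.dist s w ≤ 2 := by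
  rcases hvw with rfl | hvw
  · exact (dist_le hsv.toWalk).trans (by simp)
  · exact (dist_le (Walk.cons hsv hvw.toWalk)).trans (by simp)

lemma dist_le_two_of_neighborSet_subset {c a : V} (hcs : G.neighborSet c ⊆ G.neighborSet s)
    (hca : G.Adj c a) (hcw : c = w ∨ G.Adj c w) : G.dist s w ≤ 2 := by
  rcases hcw with rfl | hcw
  · exact dist_le_two_of_adj_of_eq_or_adj (hcs hca) (Or.inr hca.symm)
  · exact dist_le_two_of_adj_of_eq_or_adj (hcs hcw) (Or.inl rfl)

end SimpleGraph

section ZeroDivisorGraph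

variable {S : Type*} [CommSemigroup S] [Zero S]

lemma exists_ne_zero_mul_eq_zero_of_mul_self_eq_zero (hz : ∀ x : S, 0 * x = 0) {c y z : S}
    (hcc : c * c = 0) (hy : y ≠ 0) (hzy : z * y = 0) :
    ∃ w, w ≠ 0 ∧ w * c = 0 ∧ z * w = 0 := by
  by_cases hcy : c * y = 0
  · exact ⟨y, hy, by rwa [mul_comm], hzy⟩
  · refine ⟨c * y, hcy, by rw [mul_right_comm, hcc, hz], ?_⟩
    rw [mul_left_comm, hzy, mul_comm, hz]

variable {a b c s v z : {t : S // IsZeroDivisorElem t}}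

lemma zdGraph_eq_or_adj_of_mul_eq_zero (h : (v : S) * z = 0) : v = z ∨ (zdGraph S).Adj v z := by
  by_cases hvz : v = z
  exacts [Or.inl hvz, Or.inr ⟨hvz, h⟩]

lemma eq_of_mul_eq_zero_of_neighborSet_eq (hc : (zdGraph S).neighborSet c = {a, b}) {w : S}
    (hw : w * c = 0) : w = 0 ∨ w = a ∨ w = b ∨ w = c := by
  by_cases hw0 : w = 0
  · exact Or.inl hw0
  obtain hwc | hadj := zdGraph_eq_or_adj_of_mul_eq_zero (v := c) (z := ⟨w, hw0, c, c.2.1, hw⟩)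
    (by rwa [mul_comm])
  · exact Or.inr (Or.inr (Or.inr (congrArg Subtype.val hwc).symm))
  · rw [← SimpleGraph.mem_neighborSet, hc] at hadj
    rcases hadj with h | h
    exacts [Or.inr (Or.inl (congrArg Subtype.val h)),
      Or.inr (Or.inr (Or.inl (congrArg Subtype.val h)))]

lemma mul_ne_zero_of_adj_of_dist_eq_three (hsv : (zdGraph S).Adj s v)
    (hd : (zdGraph S).dist s z = 3) : (z : S) * v ≠ 0 := fun h => by
  have := SimpleGraph.dist_le_two_of_adj_of_eq_or_adj hsv
    (zdGraph_eq_or_adj_of_mul_eq_zero (by rwa [mul_comm]))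
  omega

lemma mul_ne_zero_of_neighborSet_subset_of_dist_eq_three
    (hcs : (zdGraph S).neighborSet c ⊆ (zdGraph S).neighborSet s) (hca : (zdGraph S).Adj c a)
    (hd : (zdGraph S).dist s z = 3) : (z : S) * c ≠ 0 := fun h => by
  have := SimpleGraph.dist_le_two_of_neighborSet_subset hcs hca
    (zdGraph_eq_or_adj_of_mul_eq_zero (by rwa [mul_comm]))
  omega

lemma setOf_mul_eq_zero_eq_of_neighborSet_eq (hz : ∀ x : S, 0 * x = 0)
    (hc : (zdGraph S).neighborSet c = {a, b}) (hcc : (c : S) * c ≠ 0) :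
    {x : S | x * c = 0} = {0, (a : S), (b : S)} := by
  have hca : (zdGraph S).Adj c a := by rw [← SimpleGraph.mem_neighborSet, hc]; simp
  have hcb : (zdGraph S).Adj c b := by rw [← SimpleGraph.mem_neighborSet, hc]; simp
  ext x
  simp only [Set.mem_ofPred_eq, Set.mem_insert_iff, Set.mem_singleton_iff]
  constructor
  · intro hx
    rcases eq_of_mul_eq_zero_of_neighborSet_eq hc hx with h | h | h | rfl
    exacts [Or.inl h, Or.inr (Or.inl h), Or.inr (Or.inr h), absurd hx hcc]
  · rintro (rfl | rfl | rfl)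
    exacts [hz _, by rw [mul_comm]; exact hca.2, by rw [mul_comm]; exact hcb.2]

end ZeroDivisorGraph

theorem stmt5_general {S : Type*} [CommSemigroup S] [Zero S] (hz : ∀ x : S, 0 * x = 0)
    (a b s z : {t : S // IsZeroDivisorElem t})
    (hs : (zdGraph S).neighborSet s = {a, b})
    (hd : (zdGraph S).dist s z = 3) :
    ∀ c : {t : S // IsZeroDivisorElem t}, (zdGraph S).neighborSet c = {a, b} →
      (c : S) * (c : S) ≠ 0 ∧
      {x : S | x * (c : S) = 0} = {0, (a : S), (b : S)} := by
  intro c hc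
  have hsa : (zdGraph S).Adj s a := by rw [← SimpleGraph.mem_neighborSet, hs]; simp
  have hsb : (zdGraph S).Adj s b := by rw [← SimpleGraph.mem_neighborSet, hs]; simp
  have hca : (zdGraph S).Adj c a := by rw [← SimpleGraph.mem_neighborSet, hc]; simp
  have hcc : (c : S) * c ≠ 0 := by
    intro hcc
    obtain ⟨y, hy, hzy⟩ := z.2.2
    obtain ⟨w, hw, hwc, hzw⟩ := exists_ne_zero_mul_eq_zero_of_mul_self_eq_zero hz hcc hy hzy
    rcases eq_of_mul_eq_zero_of_neighborSet_eq hc hwc with rfl | rfl | rfl | rfl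
    · exact hw rfl
    · exact mul_ne_zero_of_adj_of_dist_eq_three hsa hd hzw
    · exact mul_ne_zero_of_adj_of_dist_eq_three hsb hd hzw
    · exact mul_ne_zero_of_neighborSet_subset_of_dist_eq_three (hc.trans hs.symm).subset hca hd hzw
  exact ⟨hcc, setOf_mul_eq_zero_eq_of_neighborSet_eq hz hc hcc⟩

/-- Under condition (△), every c with N(c) = {a,b} satisfies c² ≠ 0 and Ann(c) = {0, a, b}. -/
theorem stmt5 {S : Type*} [CommSemigroup S] [Zero S] (hz : ∀ x : S, 0 * x = 0)
    (a b s z : {t : S // IsZeroDivisorElem t})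
    (hab : (zdGraph S).Adj a b)
    (hs : (zdGraph S).neighborSet s = {a, b})
    (hd : (zdGraph S).dist s z = 3) :
    ∀ c : {t : S // IsZeroDivisorElem t}, (zdGraph S).neighborSet c = {a, b} →
      (c : S) * (c : S) ≠ 0 ∧
      {x : S | x * (c : S) = 0} = {0, (a : S), (b : S)} :=
  stmt5_general hz a b s z hs hd
end

section
/- Let S be a commutative semigroup with zero and G = Γ(S). Suppose there exist adjacent vertices a, b, a vertex s with N(s) = {a,b}, and a vertex z with d(s,z) = 3. Let L = {y ∈ V(G) : d(s,y) = 3}. Then L is a sub-semigroup of S: for all u, v ∈ L, uv ∈ L (in particular uv ≠ 0). -/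
/-
If `N(s) = {a, b}` with `ab = 0`, then the nonzero annihilator of `s` is contained in `{s, a, b}`.
Hence an element `x` with `ax ≠ 0` and `bx ≠ 0` also has `sx ≠ 0`, and this property is closed
under products: `(cu)s = 0` for `c ∈ {a, b}` forces `cu ∈ {s, a, b}`, so `(cu)v ≠ 0`.
For a vertex `w` the property is equivalent to `d(s, w) ≥ 3`, since a shorter path from `s`
ends in `s`, `a`, `b`, or a neighbour of one of them. Finally, if `s - x - y - u` is a path, then
`y` annihilates `uv` and `y ≠ uv` (as `x ∈ {a, b}` annihilates `y`), so `d(s, uv) ≤ 3`.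
-/

section

variable {S : Type*} [CommSemigroup S] [Zero S]

theorem IsZeroDivisorElem.mul (hz : ∀ x : S, 0 * x = 0) {u : S} (hu : IsZeroDivisorElem u)
    (v : S) (huv : u * v ≠ 0) : IsZeroDivisorElem (u * v) :=
  let ⟨_, y, hy, huy⟩ := hu
  ⟨huv, y, hy, by rw [mul_right_comm, huy, hz]⟩

namespace zdGraph

variable {a b s : {t : S // IsZeroDivisorElem t}}

theorem adj_of_eq_mul (hz : ∀ x : S, 0 * x = 0) {x u w : {t : S // IsZeroDivisorElem t}} {t : S}
    (hxu : (zdGraph S).Adj x u) (hw : (w : S) = u * t) (hxw : x ≠ w) : (zdGraph S).Adj x w :=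
  ⟨hxw, by rw [hw, ← mul_assoc, hxu.2, hz]⟩

theorem adj_iff_of_neighborSet_eq (hs : (zdGraph S).neighborSet s = {a, b})
    {x : {t : S // IsZeroDivisorElem t}} : (zdGraph S).Adj s x ↔ x = a ∨ x = b := by
  rw [← SimpleGraph.mem_neighborSet, hs]
  rfl

theorem eq_or_eq_or_eq_of_mul_eq_zero (hs : (zdGraph S).neighborSet s = {a, b}) {e : S}
    (he : e ≠ 0) (h : e * s = 0) : e = s ∨ e = a ∨ e = b := by
  by_cases hes : e = s
  · exact Or.inl hes
  have hadj : (zdGraph S).Adj s ⟨e, he, s, s.2.1, h⟩ :=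
    ⟨fun h' ↦ hes (congrArg Subtype.val h').symm, by rw [mul_comm, h]⟩
  rcases (adj_iff_of_neighborSet_eq hs).mp hadj with h' | h'
  · exact Or.inr (Or.inl (congrArg Subtype.val h'))
  · exact Or.inr (Or.inr (congrArg Subtype.val h'))

theorem mul_ne_zero_of_neighborSet_eq (hz : ∀ x : S, 0 * x = 0) (hab : (zdGraph S).Adj a b)
    (hs : (zdGraph S).neighborSet s = {a, b}) {x : S} (hax : a * x ≠ 0) (hbx : b * x ≠ 0) :
    s * x ≠ 0 := by
  intro hsx
  have hx : x ≠ 0 := fun h ↦ hax (by rw [h, mul_comm, hz])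
  have has : (a : S) * s = 0 := by
    rw [mul_comm]
    exact ((adj_iff_of_neighborSet_eq hs).mpr (Or.inl rfl)).2
  rcases eq_or_eq_or_eq_of_mul_eq_zero hs hx (by rw [mul_comm, hsx]) with rfl | rfl | rfl
  · exact hax has
  · exact hbx (by rw [mul_comm]; exact hab.2)
  · exact hax hab.2

theorem mul_mul_ne_zero (hz : ∀ x : S, 0 * x = 0) (hab : (zdGraph S).Adj a b)
    (hs : (zdGraph S).neighborSet s = {a, b}) {c : {t : S // IsZeroDivisorElem t}} {u v : S}
    (hsc : (zdGraph S).Adj s c) (hcu : c * u ≠ 0) (hav : a * v ≠ 0) (hbv : b * v ≠ 0) :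
    c * (u * v) ≠ 0 := by
  have hcus : c * u * s = 0 := by rw [mul_right_comm, mul_comm (c : S), hsc.2, hz]
  rw [← mul_assoc]
  rcases eq_or_eq_or_eq_of_mul_eq_zero hs hcu hcus with h | h | h <;> rw [h]
  exacts [mul_ne_zero_of_neighborSet_eq hz hab hs hav hbv, hav, hbv]

theorem mul_ne_zero_of_dist_eq_three {c w : {t : S // IsZeroDivisorElem t}}
    (hsc : (zdGraph S).Adj s c) (hw : (zdGraph S).dist s w = 3) : (c : S) * w ≠ 0 := by
  intro hcw
  by_cases h : c = w
  · subst h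
    rw [SimpleGraph.dist_eq_one_iff_adj.mpr hsc] at hw
    omega
  · have : (zdGraph S).dist s w ≤ 2 := (zdGraph S).dist_le (.cons hsc (.cons ⟨h, hcw⟩ .nil))
    omega

theorem three_le_length_of_mul_ne_zero (hz : ∀ x : S, 0 * x = 0) (hab : (zdGraph S).Adj a b)
    (hs : (zdGraph S).neighborSet s = {a, b}) {w : {t : S // IsZeroDivisorElem t}}
    (haw : (a : S) * w ≠ 0) (hbw : (b : S) * w ≠ 0) (p : (zdGraph S).Walk s w) :
    3 ≤ p.length := by
  have hnbr : ∀ x, (zdGraph S).Adj s x → (x : S) * w ≠ 0 := by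
    intro x hx
    rcases (adj_iff_of_neighborSet_eq hs).mp hx with rfl | rfl
    exacts [haw, hbw]
  rcases p with _ | ⟨h1, _ | ⟨h2, _ | ⟨_, _⟩⟩⟩
  · exact (haw (by rw [mul_comm]; exact ((adj_iff_of_neighborSet_eq hs).mpr (Or.inl rfl)).2)).elim
  · exact absurd h1.2 (mul_ne_zero_of_neighborSet_eq hz hab hs haw hbw)
  · exact absurd h2.2 (hnbr _ h1)
  · simp

theorem exists_walk_length_three_of_eq_mul (hz : ∀ x : S, 0 * x = 0)
    (hs : (zdGraph S).neighborSet s = {a, b}) {u w : {t : S // IsZeroDivisorElem t}} {t : S}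
    (p : (zdGraph S).Walk s u) (hp : p.length = 3) (hw : (w : S) = u * t)
    (haw : (a : S) * w ≠ 0) (hbw : (b : S) * w ≠ 0) :
    ∃ q : (zdGraph S).Walk s w, q.length = 3 := by
  rcases p with _ | ⟨h1, _ | ⟨h2, _ | ⟨h3, _ | ⟨_, _⟩⟩⟩⟩ <;> simp at hp
  rename_i x y
  have hyw : y ≠ w := by
    rintro rfl
    rcases (adj_iff_of_neighborSet_eq hs).mp h1 with rfl | rfl
    exacts [haw h2.2, hbw h2.2]
  exact ⟨.cons h1 (.cons h2 (.cons (adj_of_eq_mul hz h3 hw hyw) .nil)), rfl⟩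

end zdGraph

end

open zdGraph in
theorem stmt7_general {S : Type*} [CommSemigroup S] [Zero S] (hz : ∀ x : S, 0 * x = 0)
    (a b s : {t : S // IsZeroDivisorElem t})
    (hab : (zdGraph S).Adj a b)
    (hs : (zdGraph S).neighborSet s = {a, b}) :
    ∀ u v : {t : S // IsZeroDivisorElem t},
      (zdGraph S).dist s u = 3 → (zdGraph S).dist s v = 3 →
      ∃ h : IsZeroDivisorElem ((u : S) * (v : S)),
        (zdGraph S).dist s ⟨(u : S) * (v : S), h⟩ = 3 := by
  intro u v hu hv
  have hsa : (zdGraph S).Adj s a := (adj_iff_of_neighborSet_eq hs).mpr (Or.inl rfl)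
  have hsb : (zdGraph S).Adj s b := (adj_iff_of_neighborSet_eq hs).mpr (Or.inr rfl)
  have hav := mul_ne_zero_of_dist_eq_three hsa hv
  have hbv := mul_ne_zero_of_dist_eq_three hsb hv
  have hauv : (a : S) * (u * v) ≠ 0 :=
    mul_mul_ne_zero hz hab hs hsa (mul_ne_zero_of_dist_eq_three hsa hu) hav hbv
  have hbuv : (b : S) * (u * v) ≠ 0 :=
    mul_mul_ne_zero hz hab hs hsb (mul_ne_zero_of_dist_eq_three hsb hu) hav hbv
  have huv : (u : S) * v ≠ 0 := fun h ↦ hauv (by rw [h, mul_comm, hz])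
  refine ⟨u.2.mul hz v huv, ?_⟩
  obtain ⟨p, hp⟩ := (zdGraph S).exists_walk_of_dist_ne_zero (hu ▸ three_ne_zero)
  obtain ⟨q, hq⟩ := exists_walk_length_three_of_eq_mul hz hs p (hp.trans hu)
    (w := ⟨_, u.2.mul hz v huv⟩) rfl hauv hbuv
  obtain ⟨r, hr⟩ := q.reachable.exists_walk_length_eq_dist
  exact le_antisymm (hq ▸ (zdGraph S).dist_le q)
    (hr ▸ three_le_length_of_mul_ne_zero hz hab hs hauv hbuv r)

/-- Under condition (△), L = {y : d(s,y) = 3} is a sub-semigroup: products of elements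
of L are again (nonzero) vertices at distance 3 from s. -/
theorem stmt7 {S : Type*} [CommSemigroup S] [Zero S] (hz : ∀ x : S, 0 * x = 0)
    (a b s z : {t : S // IsZeroDivisorElem t})
    (hab : (zdGraph S).Adj a b)
    (hs : (zdGraph S).neighborSet s = {a, b})
    (hd : (zdGraph S).dist s z = 3) :
    ∀ u v : {t : S // IsZeroDivisorElem t},
      (zdGraph S).dist s u = 3 → (zdGraph S).dist s v = 3 →
      ∃ h : IsZeroDivisorElem ((u : S) * (v : S)),
        (zdGraph S).dist s ⟨(u : S) * (v : S), h⟩ = 3 :=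
  stmt7_general hz a b s hab hs
end
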